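/- arXiv:2408.15478 — 4 statements merged into one kernel-verified Lean document; each statement's English description precedes it below -/
import Mathlib

section
/- The cactus group J₃ is isomorphic to the free product (ℤ/2ℤ) * (ℤ/2ℤ) of two cyclic groups of order two. -/
/-- Generators of the cactus group `J₃`. -/
inductive CactusGen : Type
  | s12 | s23 | s13
  deriving DecidableEq

open FreeGroup in
/-- Relators of the cactus group `J₃`:
`s₁₂² = s₂₃² = s₁₃² = 1`, `s₁₂·s₁₃ = s₁₃·s₂₃`, `s₂₃·s₁₃ = s₁₃·s₁₂`. -/
def cactusRels : Set (FreeGroup CactusGen) :=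
  { of .s12 * of .s12,
    of .s23 * of .s23,
    of .s13 * of .s13,
    of .s12 * of .s13 * (of .s13 * of .s23)⁻¹,
    of .s23 * of .s13 * (of .s13 * of .s12)⁻¹ }

/-- The cactus group `J₃` as a presented group. -/
abbrev J3 : Type := PresentedGroup cactusRels

def s12 : J3 := PresentedGroup.of .s12
def s23 : J3 := PresentedGroup.of .s23
def s13 : J3 := PresentedGroup.of .s13

/-! The relation `s₂₃ s₁₃ = s₁₃ s₁₂` and `s₁₃² = 1` give `s₂₃ = s₁₃ s₁₂ s₁₃`; after eliminating
`s₂₃` this way, the remaining relations other than `s₁₂² = s₁₃² = 1` hold automatically. So `J₃`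
is freely generated by the two involutions `s₁₂` and `s₁₃`, which is the universal property of
`C₂ ∗ C₂`. -/

section CyclicHom

variable {M : Type*} [Monoid M] {n : ℕ} [NeZero n]

def zmodPowHom (x : M) (hx : x ^ n = 1) : Multiplicative (ZMod n) →* M where
  toFun k := x ^ k.toAdd.val
  map_one' := by simp
  map_mul' a b := by
    rw [toAdd_mul, ZMod.val_add, ← pow_eq_pow_mod _ hx, pow_add]

@[simp]
lemma zmodPowHom_ofAdd_one (x : M) (hx : x ^ n = 1) : zmodPowHom x hx (.ofAdd 1) = x := by
  rw [zmodPowHom, MonoidHom.coe_mk, OneHom.coe_mk, toAdd_ofAdd, ZMod.val_one_eq_one_mod,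
    ← pow_eq_pow_mod _ hx, pow_one]

lemma MonoidHom.ext_multiplicative_zmod {f g : Multiplicative (ZMod n) →* M}
    (h : f (.ofAdd 1) = g (.ofAdd 1)) : f = g := by
  refine MonoidHom.ext fun k => ?_
  have hk : k = .ofAdd 1 ^ k.toAdd.val := by
    rw [← ofAdd_nsmul, nsmul_one, ZMod.natCast_zmod_val, ofAdd_toAdd]
  rw [hk, map_pow, map_pow, h]

end CyclicHom

namespace J3

variable {G : Type*} [Group G]

def genImage (a b : G) : CactusGen → G
  | .s12 => a
  | .s13 => b
  | .s23 => b * a * b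

def lift (a b : G) (ha : a * a = 1) (hb : b * b = 1) : J3 →* G :=
  PresentedGroup.toGroup (f := genImage a b) <| by
    have ha' : ∀ x : G, a * (a * x) = x := fun x => by rw [← mul_assoc, ha, one_mul]
    have hb' : ∀ x : G, b * (b * x) = x := fun x => by rw [← mul_assoc, hb, one_mul]
    rintro r (rfl | rfl | rfl | rfl | rfl) <;>
      simp [genImage, inv_eq_of_mul_eq_one_right ha, inv_eq_of_mul_eq_one_right hb, ha, hb, ha',
        hb', mul_assoc]

@[simp]
lemma lift_s12 (a b : G) (ha : a * a = 1) (hb : b * b = 1) : lift a b ha hb s12 = a :=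
  PresentedGroup.toGroup.of _

@[simp]
lemma lift_s13 (a b : G) (ha : a * a = 1) (hb : b * b = 1) : lift a b ha hb s13 = b :=
  PresentedGroup.toGroup.of _

lemma s12_mul_self : s12 * s12 = 1 :=
  PresentedGroup.one_of_mem (by simp [cactusRels])

lemma s13_mul_self : s13 * s13 = 1 :=
  PresentedGroup.one_of_mem (by simp [cactusRels])

lemma s23_eq : s23 = s13 * s12 * s13 := by
  have h : s23 * s13 = s13 * s12 := PresentedGroup.mk_eq_mk_of_mul_inv_mem (by simp [cactusRels])
  rw [← h, mul_assoc, s13_mul_self, mul_one]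

lemma hom_ext {φ ψ : J3 →* G} (h12 : φ s12 = ψ s12) (h13 : φ s13 = ψ s13) : φ = ψ :=
  PresentedGroup.ext fun
    | .s12 => h12
    | .s13 => h13
    | .s23 => show φ s23 = ψ s23 by simp only [s23_eq, map_mul, h12, h13]

end J3

local notation "C₂" => Multiplicative (ZMod 2)

/-- `J₃` is isomorphic to the free product `(ℤ/2ℤ) ∗ (ℤ/2ℤ)`. -/
theorem J3_iso_freeProduct :
    Nonempty (J3 ≃* Monoid.Coprod (Multiplicative (ZMod 2)) (Multiplicative (ZMod 2))) := by
  have hgen : (.ofAdd 1 : C₂) * .ofAdd 1 = 1 := rfl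
  let toCoprod : J3 →* Monoid.Coprod C₂ C₂ := J3.lift (.inl (.ofAdd 1)) (.inr (.ofAdd 1))
    (by rw [← map_mul, hgen, map_one]) (by rw [← map_mul, hgen, map_one])
  let ofCoprod : Monoid.Coprod C₂ C₂ →* J3 := Monoid.Coprod.lift
    (zmodPowHom s12 (by rw [sq, J3.s12_mul_self])) (zmodPowHom s13 (by rw [sq, J3.s13_mul_self]))
  refine ⟨toCoprod.toMulEquiv ofCoprod ?_ ?_⟩
  · exact J3.hom_ext (by simp [toCoprod, ofCoprod]) (by simp [toCoprod, ofCoprod])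
  · exact Monoid.Coprod.hom_ext
      (MonoidHom.ext_multiplicative_zmod (by simp [toCoprod, ofCoprod]))
      (MonoidHom.ext_multiplicative_zmod (by simp [toCoprod, ofCoprod]))
end

section
/- Every element x of the cactus group J₃ can be written in exactly one of the forms x = (s₁₂·s₁₃)ⁿ or x = (s₁₂·s₁₃)ⁿ·s₁₂ for a unique integer n; that is, the expressions (s₁₂·s₁₃)ⁿ and (s₁₂·s₁₃)ᵐ·s₁₂ (n, m ∈ ℤ) enumerate all elements of J₃ without repetition. -/
/-!
`J₃` is the infinite dihedral group `DihedralGroup 0`: `s₁₂ ↦ sr 0`, `s₁₃ ↦ sr 1`, `s₂₃ ↦ sr 2`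
respects the relations, and `r i ↦ (s₁₂s₁₃)ⁱ`, `sr i ↦ s₁₂(s₁₂s₁₃)ⁱ` is an inverse homomorphism
because conjugation by the involution `s₁₂` inverts `s₁₂s₁₃`. The normal form in `J₃` is the
transport of the normal form `r n`, `sr n` of the infinite dihedral group.
-/

lemma s12_mul_s12 : s12 * s12 = 1 :=
  PresentedGroup.one_of_mem (by simp [cactusRels])

lemma s13_mul_s13 : s13 * s13 = 1 :=
  PresentedGroup.one_of_mem (by simp [cactusRels])

lemma s12_mul_s13 : s12 * s13 = s13 * s23 :=
  PresentedGroup.mk_eq_mk_of_mul_inv_mem (by simp [cactusRels])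

lemma s12_inv : s12⁻¹ = s12 := inv_eq_of_mul_eq_one_right s12_mul_s12

lemma s13_inv : s13⁻¹ = s13 := inv_eq_of_mul_eq_one_right s13_mul_s13

lemma s12_mul_s12_mul (x : J3) : s12 * (s12 * x) = x := by
  rw [← mul_assoc, s12_mul_s12, one_mul]

lemma s12_mul_s12_mul_s13_mul_s12 : s12 * (s12 * s13) * s12 = (s12 * s13)⁻¹ := by
  rw [mul_inv_rev, s12_inv, s13_inv, s12_mul_s12_mul]

lemma s12_mul_zpow_mul_s12 (n : ℤ) : s12 * (s12 * s13) ^ n * s12 = (s12 * s13) ^ (-n) := by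
  have := map_zpow (MulAut.conj s12) (s12 * s13) n
  simpa only [MulAut.conj_apply, s12_inv, s12_mul_s12_mul_s13_mul_s12, zpow_neg, inv_zpow]
    using this

open DihedralGroup

def cactusGenToDihedral : CactusGen → DihedralGroup 0
  | .s12 => sr 0
  | .s13 => sr 1
  | .s23 => sr 2

lemma lift_cactusGenToDihedral_of_mem_rels :
    ∀ r ∈ cactusRels, FreeGroup.lift cactusGenToDihedral r = 1 := by
  rintro r (rfl | rfl | rfl | rfl | rfl) <;>
    simp [cactusGenToDihedral, sr_mul_sr, inv_sr, ← r_zero] <;> ring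

def cactusToDihedral : J3 →* DihedralGroup 0 :=
  PresentedGroup.toGroup lift_cactusGenToDihedral_of_mem_rels

-- `ZMod 0` is `ℤ` only up to unfolding; the `id` gives the exponent the type `ℤ`.
def dihedralToCactus : DihedralGroup 0 →* J3 where
  toFun
    | r i => (s12 * s13) ^ (id i : ℤ)
    | sr i => s12 * (s12 * s13) ^ (id i : ℤ)
  map_one' := zpow_zero (s12 * s13)
  map_mul' := by
    rintro (i | i) (j | j) <;> change ℤ at i j
    · exact zpow_add (s12 * s13) i j
    · show s12 * (s12 * s13) ^ (j - i) = (s12 * s13) ^ i * (s12 * (s12 * s13) ^ j)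
      calc s12 * (s12 * s13) ^ (j - i)
          = s12 * (s12 * (s12 * s13) ^ i * s12) * (s12 * s13) ^ j := by
            rw [s12_mul_zpow_mul_s12, mul_assoc, ← zpow_add, neg_add_eq_sub]
        _ = (s12 * s13) ^ i * (s12 * (s12 * s13) ^ j) := by
            simp only [mul_assoc, s12_mul_s12_mul]
    · show s12 * (s12 * s13) ^ (i + j) = s12 * (s12 * s13) ^ i * (s12 * s13) ^ j
      rw [mul_assoc, zpow_add]
    · show (s12 * s13) ^ (j - i) = s12 * (s12 * s13) ^ i * (s12 * (s12 * s13) ^ j)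
      rw [← mul_assoc, s12_mul_zpow_mul_s12, ← zpow_add, neg_add_eq_sub]

lemma cactusToDihedral_s12 : cactusToDihedral s12 = sr 0 := PresentedGroup.toGroup.of _

lemma cactusToDihedral_s13 : cactusToDihedral s13 = sr 1 := PresentedGroup.toGroup.of _

lemma cactusToDihedral_s12_mul_s13 : cactusToDihedral (s12 * s13) = r 1 := by
  rw [map_mul, cactusToDihedral_s12, cactusToDihedral_s13, sr_mul_sr, sub_zero]

lemma dihedralToCactus_comp_cactusToDihedral :
    dihedralToCactus.comp cactusToDihedral = MonoidHom.id J3 := by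
  ext (_ | _ | _)
  · exact mul_one s12
  · show s12 * (s12 * s13) ^ (2 : ℤ) = s23
    rw [zpow_two, ← mul_assoc, s12_mul_s12_mul, s12_mul_s13, ← mul_assoc, s13_mul_s13, one_mul]
  · show s12 * (s12 * s13) ^ (1 : ℤ) = s13
    rw [zpow_one, s12_mul_s12_mul]

lemma cactusToDihedral_comp_dihedralToCactus :
    cactusToDihedral.comp dihedralToCactus = MonoidHom.id (DihedralGroup 0) := by
  ext (i | i)
  · show cactusToDihedral ((s12 * s13) ^ (id i : ℤ)) = r i
    rw [map_zpow, cactusToDihedral_s12_mul_s13, r_one_zpow]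
    rfl
  · show cactusToDihedral (s12 * (s12 * s13) ^ (id i : ℤ)) = sr i
    rw [map_mul, map_zpow, cactusToDihedral_s12_mul_s13, r_one_zpow, cactusToDihedral_s12,
      sr_mul_r, zero_add]
    rfl

def cactusEquivDihedral : J3 ≃* DihedralGroup 0 :=
  cactusToDihedral.toMulEquiv dihedralToCactus dihedralToCactus_comp_cactusToDihedral
    cactusToDihedral_comp_dihedralToCactus

lemma cactusEquivDihedral_zpow_mul_cond (n : ℤ) (b : Bool) :
    cactusEquivDihedral ((s12 * s13) ^ n * cond b s12 1) = r 1 ^ n * cond b (sr 0) 1 := by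
  cases b <;> simp [cactusEquivDihedral, cactusToDihedral_s12_mul_s13, cactusToDihedral_s12]

lemma DihedralGroup.existsUnique_r_one_zpow_mul_cond (y : DihedralGroup 0) :
    ∃! p : ℤ × Bool, y = r 1 ^ p.1 * cond p.2 (sr 0) 1 := by
  have normal_form (n : ℤ) (b : Bool) :
      (r 1 : DihedralGroup 0) ^ n * cond b (sr 0) 1 =
        cond b (sr (-Int.cast n)) (r (Int.cast n)) := by
    cases b <;> simp [r_mul_sr]
  simp only [normal_form]
  rcases y with (i | i) <;> obtain ⟨k, rfl⟩ := ZMod.intCast_surjective i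
  · exact ⟨(k, false), rfl, by rintro ⟨n, _ | _⟩ h <;> simp_all⟩
  · exact ⟨(-k, true), by simp, by rintro ⟨n, _ | _⟩ h <;> simp_all [← Int.cast_neg]⟩

/-- every element of `J₃` is of exactly one of the forms `(s₁₂·s₁₃)ⁿ` or
`(s₁₂·s₁₃)ⁿ·s₁₂`, for a unique integer `n`. -/
theorem J3_normal_form :
    ∀ x : J3, ∃! p : ℤ × Bool, x = (s12 * s13) ^ p.1 * (cond p.2 s12 1) := by
  intro x
  simp_rw [← cactusEquivDihedral.apply_eq_iff_eq, cactusEquivDihedral_zpow_mul_cond]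
  exact DihedralGroup.existsUnique_r_one_zpow_mul_cond (cactusEquivDihedral x)
end

section
/- For every integer n, the element (s₁₂·s₁₃)ⁿ of the cactus group J₃ belongs to the subgroup H generated by s₁₂ and s₂₃ if and only if n is even. -/
/-- The subgroup `H = J₃^{2}` of `J₃` generated by `s₁₂` and `s₂₃`. -/
def H : Subgroup J3 := Subgroup.closure {s12, s23}

lemma s23_mul_s13 : s23 * s13 = s13 * s12 :=
  PresentedGroup.mk_eq_mk_of_mul_inv_mem (by simp [cactusRels])

lemma s12_mul_s13_sq : (s12 * s13) ^ 2 = s12 * s23 := by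
  calc (s12 * s13) ^ 2 = s12 * (s13 * s12) * s13 := by simp only [sq, mul_assoc]
    _ = s12 * s23 * (s13 * s13) := by rw [← s23_mul_s13]; group
    _ = s12 * s23 := by rw [s13_mul_s13, mul_one]

def s13Parity : J3 →* Multiplicative (ZMod 2) :=
  PresentedGroup.toGroup (f := fun | .s13 => .ofAdd 1 | _ => 1) <| by
    rintro r (rfl | rfl | rfl | rfl | rfl) <;> decide

lemma H_le_ker_s13Parity : H ≤ s13Parity.ker := by
  rw [H, Subgroup.closure_le]
  rintro x (rfl | rfl) <;> rfl

lemma s13Parity_s12_mul_s13_zpow (n : ℤ) :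
    s13Parity ((s12 * s13) ^ n) = .ofAdd (n : ZMod 2) := by
  rw [map_zpow, map_mul]
  change (1 * Multiplicative.ofAdd (1 : ZMod 2)) ^ n = _
  rw [one_mul, ← ofAdd_zsmul, zsmul_one]

/-- `(s₁₂·s₁₃)ⁿ ∈ H` if and only if `n` is even. -/
theorem pow_mem_H_iff_even :
    ∀ n : ℤ, (s12 * s13) ^ n ∈ H ↔ Even n := by
  intro n
  constructor
  · intro hn
    rw [← ZMod.intCast_eq_zero_iff_even, ← ofAdd_eq_one, ← s13Parity_s12_mul_s13_zpow]
    exact H_le_ker_s13Parity hn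
  · rintro ⟨k, rfl⟩
    rw [← two_mul, zpow_mul, zpow_ofNat, s12_mul_s13_sq]
    exact zpow_mem (mul_mem (Subgroup.subset_closure (by simp))
      (Subgroup.subset_closure (by simp))) k
end

section
/- The map φ₀ : L × ℤ → J₃ is injective. -/
/-- The three labels `[213]`, `[123]`, `[132]`. -/
inductive L : Type
  | v213 | v123 | v132
  deriving DecidableEq

/-- The map `φ₀ : L × ℤ → J₃`. -/
def phi0 : L × ℤ → J3
  | (.v213, k) =>
      if k % 2 = 0 then (s12 * s23) ^ ((3 * k) / 2) * s12 else (s12 * s23) ^ ((3 * k + 1) / 2)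
  | (.v123, k) =>
      if k % 2 = 0 then (s12 * s23) ^ ((3 * k) / 2) else (s12 * s23) ^ ((3 * k - 1) / 2) * s12
  | (.v132, k) =>
      if k % 2 = 0 then (s12 * s23) ^ ((3 * k - 2) / 2) * s12 else (s12 * s23) ^ ((3 * k - 1) / 2)

/-!
Let `J₃` act on `ℤ` by the reflections `s₁₂ : x ↦ 1 - x`, `s₂₃ : x ↦ -1 - x`, `s₁₃ : x ↦ -x`.
Then `s₁₂·s₂₃` is the translation by `2`, and the orbit map `g ↦ g • 0` sends `φ₀(l, k)` to
`3k + 1`, `3k`, `3k - 1` for `l = [213], [123], [132]`. These values are pairwise distinct,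
so `φ₀` is injective already after composing with the orbit map.
-/

def cactusReflection : CactusGen → Equiv.Perm ℤ
  | .s12 => Equiv.subLeft 1
  | .s23 => Equiv.subLeft (-1)
  | .s13 => Equiv.subLeft 0

lemma cactusReflection_rels : ∀ r ∈ cactusRels, FreeGroup.lift cactusReflection r = 1 := by
  rintro r (rfl | rfl | rfl | rfl | rfl) <;>
    ext x <;> simp [cactusReflection, Equiv.Perm.mul_apply]

noncomputable def cactusRep : J3 →* Equiv.Perm ℤ := PresentedGroup.toGroup cactusReflection_rels

@[simp] lemma cactusRep_s12_apply (x : ℤ) : cactusRep s12 x = 1 - x := by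
  simp [cactusRep, s12, cactusReflection]

@[simp] lemma cactusRep_s23_apply (x : ℤ) : cactusRep s23 x = -1 - x := by
  simp [cactusRep, s23, cactusReflection]

lemma cactusRep_s12_mul_s23 : cactusRep (s12 * s23) = Equiv.addRight 2 := by
  ext x
  simp only [map_mul, Equiv.Perm.mul_apply, cactusRep_s12_apply, cactusRep_s23_apply,
    Equiv.coe_addRight]
  ring

@[simp] lemma cactusRep_s12_mul_s23_zpow_apply (n : ℤ) (x : ℤ) :
    cactusRep ((s12 * s23) ^ n) x = x + 2 * n := by
  rw [map_zpow, cactusRep_s12_mul_s23, Equiv.zsmul_addRight, Equiv.coe_addRight, smul_eq_mul,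
    mul_comm]

@[simp] lemma cactusRep_s12_mul_s23_zpow_mul_s12_apply (n : ℤ) (x : ℤ) :
    cactusRep ((s12 * s23) ^ n * s12) x = 2 * n + 1 - x := by
  rw [map_mul, Equiv.Perm.mul_apply, cactusRep_s12_apply, cactusRep_s12_mul_s23_zpow_apply]
  ring

def L.offset : L → ℤ
  | .v213 => 1
  | .v123 => 0
  | .v132 => -1

lemma cactusRep_phi0_apply_zero (p : L × ℤ) : cactusRep (phi0 p) 0 = 3 * p.2 + p.1.offset := by
  obtain ⟨l, k⟩ := p
  cases l <;> simp only [phi0] <;> split_ifs <;>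
    simp only [cactusRep_s12_mul_s23_zpow_apply, cactusRep_s12_mul_s23_zpow_mul_s12_apply,
      L.offset] <;> omega

lemma injective_three_mul_add_offset :
    Function.Injective fun p : L × ℤ => 3 * p.2 + p.1.offset := by
  rintro ⟨l₁, k₁⟩ ⟨l₂, k₂⟩ h
  cases l₁ <;> cases l₂ <;>
    simp only [L.offset, Prod.mk.injEq, reduceCtorEq, true_and, false_and] at h ⊢ <;> omega

/-- the map `φ₀ : L × ℤ → J₃` is injective. -/
theorem phi0_injective : Function.Injective phi0 := by
  intro p q h
  apply injective_three_mul_add_offset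
  simp only [← cactusRep_phi0_apply_zero, h]
end
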